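/- arXiv:2602.01048 — 9 statements merged into one kernel-verified Lean document; each statement's English description precedes it below -/
import Mathlib

section
/- Let agents at locations x₁, …, xₙ ∈ ℝ belong to groups G₁, …, Gₘ with positive weights. Suppose a facility location f satisfies the balance condition max_j wⱼ·Lⱼ(f) ≥ max_j wⱼ·Rⱼ(f), where Lⱼ(f) and Rⱼ(f) count agents of group j at-or-left of f and strictly right of f respectively. Assume moreover that no agent lies strictly between f and an arbitrary point y* ≥ f. Then max_j wⱼ·Σ_{i∈Gⱼ}|f − xᵢ| ≤ 2 · max_j wⱼ·Σ_{i∈Gⱼ}|y* − xᵢ|. -/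
/-!
Let `A = max_j wⱼ Lⱼ(f)` and `S = MGE(y*)`. Every agent at or left of `f` is at distance at least
`y* - f` from `y*`, so the group attaining `A` already pays `A (y* - f) ≤ S` at `y*`. Moving the
facility from `y*` back to `f` does not hurt agents at or left of `f` and costs every other agent at most
`y* - f`, so group `j` pays at most `wⱼ Σ |y* - xᵢ| + wⱼ Rⱼ(f) (y* - f) ≤ S + A (y* - f) ≤ 2 S`,
using the balance condition `wⱼ Rⱼ(f) ≤ A`.
-/

open Finset

variable {ι κ : Type*} {f y : ℝ}

lemma abs_sub_le_abs_sub_add_ite (hfy : f ≤ y) (a : ℝ) :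
    |f - a| ≤ |y - a| + (if f < a then 1 else 0) * (y - f) := by
  split_ifs with hfa
  · have := abs_sub_le f y a
    rw [abs_sub_comm f y, abs_of_nonneg (sub_nonneg.2 hfy)] at this
    linarith
  · rw [abs_of_nonneg (by linarith), abs_of_nonneg (by linarith)]
    linarith

lemma Finset.sum_abs_sub_le_add_card_filter_mul (s : Finset ι) (x : ι → ℝ) (hfy : f ≤ y) :
    ∑ i ∈ s, |f - x i| ≤ ∑ i ∈ s, |y - x i| + #{i ∈ s | f < x i} * (y - f) := by
  rw [natCast_card_filter, sum_mul, ← sum_add_distrib]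
  exact sum_le_sum fun i _ => abs_sub_le_abs_sub_add_ite hfy (x i)

lemma Finset.card_filter_le_mul_le_sum_abs (s : Finset ι) (x : ι → ℝ) (hfy : f ≤ y) :
    #{i ∈ s | x i ≤ f} * (y - f) ≤ ∑ i ∈ s, |y - x i| :=
  calc #{i ∈ s | x i ≤ f} * (y - f)
      = ∑ _i ∈ s with x _i ≤ f, (y - f) := by rw [sum_const, nsmul_eq_mul]
    _ ≤ ∑ i ∈ s with x i ≤ f, |y - x i| :=
        sum_le_sum fun i hi => by
          rw [abs_of_nonneg (by linarith [(mem_filter.1 hi).2])]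
          linarith [(mem_filter.1 hi).2]
    _ ≤ ∑ i ∈ s, |y - x i| :=
        sum_le_sum_of_subset_of_nonneg (filter_subset _ _) fun _ _ _ => abs_nonneg _

lemma Finset.sup'_mul_card_filter_le_sup'_mul_sum_abs (s : Finset κ) (hs : s.Nonempty)
    (G : κ → Finset ι) (x : ι → ℝ) {w : κ → ℝ} (hw : ∀ j, 0 ≤ w j) (hfy : f ≤ y) :
    s.sup' hs (fun j => w j * #{i ∈ G j | x i ≤ f}) * (y - f)
      ≤ s.sup' hs (fun j => w j * ∑ i ∈ G j, |y - x i|) := by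
  obtain ⟨k, hk, hmax⟩ := exists_mem_eq_sup' hs fun j => w j * (#{i ∈ G j | x i ≤ f} : ℝ)
  rw [hmax, mul_assoc]
  exact le_sup'_of_le _ hk <|
    mul_le_mul_of_nonneg_left ((G k).card_filter_le_mul_le_sum_abs x hfy) (hw k)

theorem stmt3_general (n m : ℕ) (x : Fin n → ℝ)
    (G : Fin m → Finset (Fin n))
    (w : Fin m → ℝ) (hw : ∀ j, 0 < w j)
    (f ystar : ℝ) (hfy : f ≤ ystar)
    (hU : (Finset.univ : Finset (Fin m)).Nonempty)
    (hbal : Finset.univ.sup' hU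
        (fun j => w j * (((G j).filter (fun i => f < x i)).card : ℝ))
      ≤ Finset.univ.sup' hU
        (fun j => w j * (((G j).filter (fun i => x i ≤ f)).card : ℝ))) :
    Finset.univ.sup' hU (fun j => w j * ∑ i ∈ G j, |f - x i|)
      ≤ 2 * Finset.univ.sup' hU (fun j => w j * ∑ i ∈ G j, |ystar - x i|) := by
  set A := univ.sup' hU fun j => w j * (#{i ∈ G j | x i ≤ f} : ℝ)
  set S := univ.sup' hU fun j => w j * ∑ i ∈ G j, |ystar - x i|
  have hAS : A * (ystar - f) ≤ S :=
    univ.sup'_mul_card_filter_le_sup'_mul_sum_abs hU G x (fun j => (hw j).le) hfy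
  refine sup'_le _ _ fun j hj => ?_
  have hRA : w j * #{i ∈ G j | f < x i} ≤ A := (le_sup' _ hj).trans hbal
  have hSj : w j * ∑ i ∈ G j, |ystar - x i| ≤ S :=
    le_sup' (fun j => w j * ∑ i ∈ G j, |ystar - x i|) hj
  calc w j * ∑ i ∈ G j, |f - x i|
      ≤ w j * (∑ i ∈ G j, |ystar - x i| + #{i ∈ G j | f < x i} * (ystar - f)) :=
        mul_le_mul_of_nonneg_left ((G j).sum_abs_sub_le_add_card_filter_mul x hfy) (hw j).le
    _ = w j * ∑ i ∈ G j, |ystar - x i| + w j * #{i ∈ G j | f < x i} * (ystar - f) := by ring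
    _ ≤ S + A * (ystar - f) := by gcongr
    _ ≤ 2 * S := by linarith

theorem stmt3 (n m : ℕ) (hm : 0 < m) (x : Fin n → ℝ)
    (G : Fin m → Finset (Fin n)) (hG : ∀ j, (G j).Nonempty)
    (w : Fin m → ℝ) (hw : ∀ j, 0 < w j)
    (f ystar : ℝ) (hfy : f ≤ ystar)
    (hgap : ∀ i : Fin n, ¬ (f < x i ∧ x i < ystar))
    (hU : (Finset.univ : Finset (Fin m)).Nonempty)
    (hbal : Finset.univ.sup' hU
        (fun j => w j * (((G j).filter (fun i => f < x i)).card : ℝ))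
      ≤ Finset.univ.sup' hU
        (fun j => w j * (((G j).filter (fun i => x i ≤ f)).card : ℝ)))
    (hpos : 0 < Finset.univ.sup' hU
        (fun j => w j * (((G j).filter (fun i => x i ≤ f)).card : ℝ))) :
    Finset.univ.sup' hU (fun j => w j * ∑ i ∈ G j, |f - x i|)
      ≤ 2 * Finset.univ.sup' hU (fun j => w j * ∑ i ∈ G j, |ystar - x i|) :=
  stmt3_general n m x G w hw f ystar hfy hU hbal
end

section
/- Consider n ≥ 3 agents on [0,1] with x₁ = 0, x₂ = ⋯ = x_{n−1} = 1/2, xₙ = 1, groups G₁ = {1} with weight w_min > 0 and G₂ = {2, …, n} with weight w_max ≥ w_min. Under the weighted total group cost objective with two facilities, the placement Y* = (w_max(n−2)/(2(w_min + w_max(n−2))), 1) achieves maximum group effect w_min·w_max·(n−2)/(2(w_min + w_max(n−2))), while the endpoint placement (0, 1) achieves maximum group effect w_max·(n−2)/2; hence the ratio of the latter to the former is exactly 1 + (n−2)·w_max/w_min. -/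
theorem stmt4 (n : ℕ) (hn : 3 ≤ n) (wmin wmax : ℝ)
    (hmin : 0 < wmin) (hle : wmin ≤ wmax)
    (c : ℝ → ℝ → ℝ → ℝ) (hc : ∀ y₁ y₂ z, c y₁ y₂ z = min |y₁ - z| |y₂ - z|)
    (MGE : ℝ → ℝ → ℝ)
    (hMGE : ∀ y₁ y₂, MGE y₁ y₂ =
      max (wmin * c y₁ y₂ 0)
          (wmax * (((n : ℝ) - 2) * c y₁ y₂ (1/2) + c y₁ y₂ 1))) :
    MGE (wmax * ((n : ℝ) - 2) / (2 * (wmin + wmax * ((n : ℝ) - 2)))) 1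
        = wmin * wmax * ((n : ℝ) - 2) / (2 * (wmin + wmax * ((n : ℝ) - 2))) ∧
    MGE 0 1 = wmax * ((n : ℝ) - 2) / 2 ∧
    MGE 0 1 = (1 + ((n : ℝ) - 2) * wmax / wmin)
        * (wmin * wmax * ((n : ℝ) - 2) / (2 * (wmin + wmax * ((n : ℝ) - 2)))) := by
  have hn' : (3 : ℝ) ≤ (n : ℝ) := by exact_mod_cast hn
  have hwmax : 0 < wmax := lt_of_lt_of_le hmin hle
  have ha : 0 < wmax * ((n : ℝ) - 2) := by nlinarith
  have hD : 0 < 2 * (wmin + wmax * ((n : ℝ) - 2)) := by nlinarith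
  set t : ℝ := wmax * ((n : ℝ) - 2) / (2 * (wmin + wmax * ((n : ℝ) - 2))) with ht
  have ht0 : 0 ≤ t := le_of_lt (div_pos ha hD)
  have ht2 : t ≤ 1/2 := by
    rw [ht, div_le_iff₀ hD]; nlinarith
  have ht1 : t ≤ 1 := le_trans ht2 (by norm_num)
  have c1 : c t 1 0 = t := by
    rw [hc]; rw [abs_of_nonneg (by linarith : (0:ℝ) ≤ t - 0), abs_of_nonneg]
    · simp [min_eq_left]; linarith
    · norm_num
  have c2 : c t 1 (1/2) = 1/2 - t := by
    rw [hc]; rw [abs_of_nonpos (by linarith : t - 1/2 ≤ 0), abs_of_nonneg (by norm_num : (0:ℝ) ≤ 1 - 1/2)]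
    rw [min_eq_left (by linarith)]; ring
  have c3 : c t 1 1 = 0 := by
    rw [hc]; simp
  have c4 : c 0 1 0 = 0 := by rw [hc]; simp
  have c5 : c 0 1 (1/2) = 1/2 := by
    rw [hc]; rw [abs_of_nonpos (by norm_num : (0:ℝ) - 1/2 ≤ 0),
      abs_of_nonneg (by norm_num : (0:ℝ) ≤ 1 - 1/2)]; norm_num
  have c6 : c 0 1 1 = 0 := by rw [hc]; simp
  have key : wmin * t = wmax * (((n : ℝ) - 2) * (1/2 - t) + 0) := by
    rw [ht]; field_simp; ring
  have h2 : MGE 0 1 = wmax * ((n : ℝ) - 2) / 2 := by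
    rw [hMGE, c4, c5, c6]
    rw [max_eq_right]
    · ring
    · nlinarith
  refine ⟨?_, h2, ?_⟩
  · rw [hMGE, c1, c2, c3, ← key, max_self, ht]
    field_simp
  · rw [h2]; field_simp
end

section
/- Let agents x₁ ≤ ⋯ ≤ xₙ belong to groups with positive weights, and let each agent i carry weight w_{g_i} equal to the maximum weight among its groups. Let Y = (x₁, xₙ) be the endpoint placement and let Y* = (y₁*, y₂*) with x₁ ≤ y₁* ≤ y₂* ≤ xₙ be any two-facility placement. Then max_i w_{g_i}·c(Y, xᵢ) ≤ (1 + w_max/w_min) · max_i w_{g_i}·c(Y*, xᵢ), where c(Z, x) = min over z ∈ Z of |z − x|, and w_max, w_min are the maximum and minimum agent weights. -/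
theorem stmt5 (n : ℕ) (hn : 2 ≤ n) (x w : Fin n → ℝ) (hx : Monotone x)
    (wmin wmax : ℝ) (hminpos : 0 < wmin)
    (hwb : ∀ i, wmin ≤ w i ∧ w i ≤ wmax)
    (hU : (Finset.univ : Finset (Fin n)).Nonempty)
    (y₁ y₂ : ℝ)
    (hy : x ⟨0, by omega⟩ ≤ y₁ ∧ y₁ ≤ y₂ ∧ y₂ ≤ x ⟨n - 1, by omega⟩)
    (c : ℝ → ℝ → ℝ → ℝ) (hc : ∀ z₁ z₂ z, c z₁ z₂ z = min |z₁ - z| |z₂ - z|) :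
    Finset.univ.sup' hU (fun i => w i * c (x ⟨0, by omega⟩) (x ⟨n - 1, by omega⟩) (x i))
      ≤ (1 + wmax / wmin) * Finset.univ.sup' hU (fun i => w i * c y₁ y₂ (x i)) := by
  set i0 : Fin n := ⟨0, by omega⟩ with hi0
  set iN : Fin n := ⟨n - 1, by omega⟩ with hiN
  obtain ⟨hy1, hy12, hy2⟩ := hy
  have hL : ∀ i : Fin n, x i0 ≤ x i := fun i => hx (by simp [hi0, Fin.le_def])
  have hR : ∀ i : Fin n, x i ≤ x iN := by
    intro i
    apply hx
    rw [Fin.le_def]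
    have := i.isLt
    simp only [hiN]
    omega
  have hwmax : wmin ≤ wmax := le_trans (hwb i0).1 (hwb i0).2
  set ρ := wmax / wmin with hρdef
  have hρ : 0 ≤ ρ := div_nonneg (by linarith) (le_of_lt hminpos)
  have hρw : ρ * wmin = wmax := div_mul_cancel₀ _ (ne_of_gt hminpos)
  set OPT := Finset.univ.sup' hU (fun i => w i * c y₁ y₂ (x i)) with hOPTdef
  have hterm : ∀ i, w i * c y₁ y₂ (x i) ≤ OPT := fun i =>
    Finset.le_sup' (fun i => w i * c y₁ y₂ (x i)) (Finset.mem_univ i)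
  have hA : wmin * (y₁ - x i0) ≤ OPT := by
    have h := hterm i0
    rw [hc] at h
    have h1 : |y₁ - x i0| = y₁ - x i0 := abs_of_nonneg (by linarith)
    have h2 : |y₂ - x i0| = y₂ - x i0 := abs_of_nonneg (by linarith)
    rw [h1, h2, min_eq_left (by linarith)] at h
    nlinarith [(hwb i0).1]
  have hB : wmin * (x iN - y₂) ≤ OPT := by
    have h := hterm iN
    rw [hc] at h
    have h1 : |y₁ - x iN| = x iN - y₁ := by rw [abs_sub_comm]; exact abs_of_nonneg (by linarith)
    have h2 : |y₂ - x iN| = x iN - y₂ := by rw [abs_sub_comm]; exact abs_of_nonneg (by linarith)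
    rw [h1, h2, min_eq_right (by linarith)] at h
    nlinarith [(hwb iN).1]
  have hOPT0 : 0 ≤ OPT := le_trans (by nlinarith) hA
  apply Finset.sup'_le
  intro i _
  rw [hc]
  obtain ⟨hwi1, hwi2⟩ := hwb i
  have hwipos : 0 < w i := lt_of_lt_of_le hminpos hwi1
  rcases le_total |y₁ - x i| |y₂ - x i| with h | h
  · -- facility y₁ is nearer
    have h1 : w i * c y₁ y₂ (x i) ≤ OPT := hterm i
    rw [hc, min_eq_left h] at h1
    have hti : x i - y₁ ≤ |y₁ - x i| := by
      rw [abs_sub_comm]; exact le_abs_self _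
    have hminle : min |x i0 - x i| |x iN - x i| ≤ x i - x i0 := by
      calc min |x i0 - x i| |x iN - x i| ≤ |x i0 - x i| := min_le_left _ _
        _ = x i - x i0 := by rw [abs_sub_comm]; exact abs_of_nonneg (by linarith [hL i])
    have hstep : w i * min |x i0 - x i| |x iN - x i| ≤ w i * (x i - x i0) :=
      mul_le_mul_of_nonneg_left hminle (le_of_lt hwipos)
    nlinarith [mul_nonneg (sub_nonneg.mpr hwi2) (sub_nonneg.mpr hy1),
      mul_nonneg (le_of_lt hwipos) (sub_nonneg.mpr hti),
      mul_nonneg hρ (sub_nonneg.mpr hA)]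
  · -- facility y₂ is nearer
    have h1 : w i * c y₁ y₂ (x i) ≤ OPT := hterm i
    rw [hc, min_eq_right h] at h1
    have hti : y₂ - x i ≤ |y₂ - x i| := le_abs_self _
    have hminle : min |x i0 - x i| |x iN - x i| ≤ x iN - x i := by
      calc min |x i0 - x i| |x iN - x i| ≤ |x iN - x i| := min_le_right _ _
        _ = x iN - x i := abs_of_nonneg (by linarith [hR i])
    have hstep : w i * min |x i0 - x i| |x iN - x i| ≤ w i * (x iN - x i) :=
      mul_le_mul_of_nonneg_left hminle (le_of_lt hwipos)
    nlinarith [mul_nonneg (sub_nonneg.mpr hwi2) (sub_nonneg.mpr hy2),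
      mul_nonneg (le_of_lt hwipos) (sub_nonneg.mpr hti),
      mul_nonneg hρ (sub_nonneg.mpr hB)]
end

section
/- Let x₁ ≤ ⋯ ≤ xₙ be agent locations with each agent i carrying a positive weight wᵢ satisfying w_min ≤ wᵢ ≤ w_max. For any agent index k and any point y* ∈ ℝ, max_i wᵢ·|xₖ − xᵢ| ≤ (1 + w_max/w_min) · max_i wᵢ·|y* − xᵢ|. In other words, placing a single facility at any agent location approximates the optimal weighted maximum cost within factor 1 + w_max/w_min. -/
theorem stmt7 (n : ℕ) (hn : 0 < n) (x w : Fin n → ℝ) (hx : Monotone x)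
    (wmin wmax : ℝ) (hminpos : 0 < wmin)
    (hwb : ∀ i, wmin ≤ w i ∧ w i ≤ wmax)
    (hU : (Finset.univ : Finset (Fin n)).Nonempty) :
    ∀ (k : Fin n) (ystar : ℝ),
      Finset.univ.sup' hU (fun i => w i * |x k - x i|)
        ≤ (1 + wmax / wmin) * Finset.univ.sup' hU (fun i => w i * |ystar - x i|) := by
  intro k ystar
  set M := Finset.univ.sup' hU (fun i => w i * |ystar - x i|) with hM
  have hMk : ∀ i, w i * |ystar - x i| ≤ M := fun i =>
    Finset.le_sup' (fun i => w i * |ystar - x i|) (Finset.mem_univ i)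
  apply Finset.sup'_le
  intro i _
  have hwi := hwb i
  have hwk := hwb k
  have hwk0 : 0 < w k := lt_of_lt_of_le hminpos hwk.1
  have habs : |x k - x i| ≤ |ystar - x k| + |ystar - x i| := by
    have := abs_sub (x k - ystar) (x i - ystar)
    calc |x k - x i| = |(x k - ystar) - (x i - ystar)| := by ring_nf
    _ ≤ |x k - ystar| + |x i - ystar| := abs_sub _ _
    _ = |ystar - x k| + |ystar - x i| := by rw [abs_sub_comm, abs_sub_comm (x i)]
  have hw0 : 0 ≤ w i := le_of_lt (lt_of_lt_of_le hminpos hwi.1)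
  have step1 : w i * |x k - x i| ≤ w i * |ystar - x k| + w i * |ystar - x i| := by
    nlinarith [mul_le_mul_of_nonneg_left habs hw0]
  have hratio : w i ≤ (wmax / wmin) * w k := by
    have h1 : wmax ≤ (wmax / wmin) * w k := by
      rw [div_mul_eq_mul_div, le_div_iff₀ hminpos]
      have hwmax0 : 0 ≤ wmax := le_trans hminpos.le (le_trans hwk.1 hwk.2)
      nlinarith [hwk.1]
    linarith [hwi.2]
  have step2 : w i * |ystar - x k| ≤ (wmax / wmin) * (w k * |ystar - x k|) := by
    have := mul_le_mul_of_nonneg_right hratio (abs_nonneg (ystar - x k))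
    linarith [this, mul_assoc (wmax / wmin) (w k) |ystar - x k|]
  have hdivnn : 0 ≤ wmax / wmin := by
    apply div_nonneg _ hminpos.le
    exact le_trans hminpos.le (le_trans hwk.1 hwk.2)
  have step3 : (wmax / wmin) * (w k * |ystar - x k|) ≤ (wmax / wmin) * M :=
    mul_le_mul_of_nonneg_left (hMk k) hdivnn
  calc w i * |x k - x i| ≤ w i * |ystar - x k| + w i * |ystar - x i| := step1
    _ ≤ (wmax / wmin) * M + M := by linarith [step2, step3, hMk i]
    _ = (1 + wmax / wmin) * M := by ring
end

section
/- Let x₁ ≤ ⋯ ≤ xₙ be agent locations with positive weights wᵢ ∈ [w_min, w_max]. Let f be the median location x_{⌈n/2⌉}. Then for any y* ∈ ℝ, max_i wᵢ·|f − xᵢ| ≤ (1 + w_max/w_min)·max_i wᵢ·|y* − xᵢ|, and this bound is tight: for the instance with two agents x₁ = 0 of weight w_min and x₂ = 1 of weight w_max, the median (= leftmost) location 0 achieves objective w_max while the optimal objective equals w_max·w_min/(w_max + w_min), giving ratio exactly 1 + w_max/w_min. -/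
noncomputable def maxWeightedCost {ι : Type*} (s : Finset ι) (hs : s.Nonempty) (w x : ι → ℝ)
    (y : ℝ) : ℝ :=
  s.sup' hs fun i => w i * |y - x i|

section MaxWeightedCost

variable {ι : Type*} {s : Finset ι} (hs : s.Nonempty) {w x : ι → ℝ}

theorem le_maxWeightedCost {i : ι} (hi : i ∈ s) (y : ℝ) :
    w i * |y - x i| ≤ maxWeightedCost s hs w x y :=
  Finset.le_sup' (fun i => w i * |y - x i|) hi

/-- Agent `j` lies within `OPT / wmin` of `y`, and every agent pays at most `wmax` times that
detour on top of its own cost at `y`. -/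
theorem maxWeightedCost_at_agent_le {wmin wmax : ℝ} (hmin : 0 < wmin)
    (hw : ∀ i ∈ s, wmin ≤ w i ∧ w i ≤ wmax) {j : ι} (hj : j ∈ s) (y : ℝ) :
    maxWeightedCost s hs w x (x j) ≤ (1 + wmax / wmin) * maxWeightedCost s hs w x y := by
  set M := maxWeightedCost s hs w x y
  have hj_close : |y - x j| ≤ M / wmin := by
    rw [le_div_iff₀ hmin, mul_comm]
    exact (mul_le_mul_of_nonneg_right (hw j hj).1 (abs_nonneg _)).trans
      (le_maxWeightedCost hs hj y)
  refine Finset.sup'_le _ _ fun i hi => ?_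
  obtain ⟨hwi_min, hwi_max⟩ := hw i hi
  have hwi_pos : 0 < w i := hmin.trans_le hwi_min
  calc w i * |x j - x i| ≤ w i * |y - x j| + w i * |y - x i| := by
        rw [← mul_add, abs_sub_comm y (x j)]
        exact mul_le_mul_of_nonneg_left (abs_sub_le _ _ _) hwi_pos.le
    _ ≤ wmax * (M / wmin) + M :=
        add_le_add (mul_le_mul hwi_max hj_close (abs_nonneg _) (hwi_pos.le.trans hwi_max))
          (le_maxWeightedCost hs hi y)
    _ = (1 + wmax / wmin) * M := by ring

end MaxWeightedCost

theorem mul_div_add_mul_abs_sub_le_max {a b : ℝ} (ha : 0 ≤ a) (hb : 0 ≤ b) (hab : 0 < a + b)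
    (p q y : ℝ) : a * b / (a + b) * |p - q| ≤ max (a * |y - p|) (b * |y - q|) := by
  have htri : |p - q| ≤ |y - p| + |y - q| := by
    rw [abs_sub_comm y p]; exact abs_sub_le _ _ _
  rw [div_mul_eq_mul_div, div_le_iff₀ hab]
  calc a * b * |p - q| ≤ b * (a * |y - p|) + a * (b * |y - q|) := by
        have := mul_le_mul_of_nonneg_left htri (mul_nonneg ha hb)
        linarith
    _ ≤ b * max (a * |y - p|) (b * |y - q|) + a * max (a * |y - p|) (b * |y - q|) := by
        gcongr
        exacts [le_max_left _ _, le_max_right _ _]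
    _ = max (a * |y - p|) (b * |y - q|) * (a + b) := by ring

theorem max_mul_abs_sub_weightedMidpoint {a b : ℝ} (ha : 0 ≤ a) (hb : 0 ≤ b) (hab : 0 < a + b)
    (p q : ℝ) :
    max (a * |(a * p + b * q) / (a + b) - p|) (b * |(a * p + b * q) / (a + b) - q|) =
      a * b / (a + b) * |p - q| := by
  have hp : (a * p + b * q) / (a + b) - p = b / (a + b) * (q - p) := by field_simp; ring
  have hq : (a * p + b * q) / (a + b) - q = a / (a + b) * (p - q) := by field_simp; ring
  rw [hp, hq, abs_mul, abs_mul, abs_of_nonneg (div_nonneg hb hab.le),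
    abs_of_nonneg (div_nonneg ha hab.le), abs_sub_comm q p]
  rw [max_eq_left (le_of_eq (by ring))]
  ring

theorem stmt8 (n : ℕ) (hn : 0 < n) (x w : Fin n → ℝ)
    (wmin wmax : ℝ) (hminpos : 0 < wmin)
    (hwb : ∀ i, wmin ≤ w i ∧ w i ≤ wmax)
    (hU : (Finset.univ : Finset (Fin n)).Nonempty) :
    (∀ ystar : ℝ,
      Finset.univ.sup' hU (fun i => w i * |x ⟨(n + 1) / 2 - 1, by omega⟩ - x i|)
        ≤ (1 + wmax / wmin) * Finset.univ.sup' hU (fun i => w i * |ystar - x i|)) ∧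
    ((∀ y : ℝ, wmax * wmin / (wmax + wmin) ≤ max (wmin * |y - 0|) (wmax * |y - 1|)) ∧
      (∃ y : ℝ, max (wmin * |y - 0|) (wmax * |y - 1|) = wmax * wmin / (wmax + wmin)) ∧
      max (wmin * |(0 : ℝ) - 0|) (wmax * |(0 : ℝ) - 1|) = wmax ∧
      wmax = (1 + wmax / wmin) * (wmax * wmin / (wmax + wmin))) := by
  have hminmax : wmin ≤ wmax := (hwb ⟨0, hn⟩).1.trans (hwb ⟨0, hn⟩).2
  have hmaxpos : 0 < wmax := hminpos.trans_le hminmax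
  have hsum : 0 < wmin + wmax := by positivity
  have hopt : wmin * wmax / (wmin + wmax) * |(0 : ℝ) - 1| = wmax * wmin / (wmax + wmin) := by
    norm_num; ring
  refine ⟨fun ystar => maxWeightedCost_at_agent_le (w := w) (x := x) hU hminpos
      (fun i _ => hwb i) (Finset.mem_univ _) ystar, fun y => ?_,
    ⟨(wmin * 0 + wmax * 1) / (wmin + wmax), ?_⟩, ?_, ?_⟩
  · exact hopt ▸ mul_div_add_mul_abs_sub_le_max hminpos.le hmaxpos.le hsum 0 1 y
  · exact hopt ▸ max_mul_abs_sub_weightedMidpoint hminpos.le hmaxpos.le hsum 0 1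
  · norm_num [hmaxpos.le]
  · field_simp; ring
end

section
/- Consider the instance with m − 1 agents at position 0, each a singleton group among G₂, …, Gₘ of weight w_min > 0, and m − 1 agents at position 1, all in group G₁ of weight w_max ≥ w_min (m ≥ 2). Under the weighted total group cost objective for a single facility, the facility location y* = (m−1)·w_max/((m−1)·w_max + w_min) achieves maximum group effect (m−1)·w_max·w_min/((m−1)·w_max + w_min), while placing the facility at 0 achieves maximum group effect (m−1)·w_max; hence the ratio is exactly 1 + (m−1)·w_max/w_min. -/
theorem stmt12 (m : ℕ) (hm : 2 ≤ m) (wmin wmax : ℝ)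
    (hmin : 0 < wmin) (hle : wmin ≤ wmax)
    (MGE : ℝ → ℝ)
    (hMGE : ∀ y : ℝ, MGE y =
      max (wmin * |y - 0|) (wmax * (((m : ℝ) - 1) * |y - 1|))) :
    MGE (((m : ℝ) - 1) * wmax / (((m : ℝ) - 1) * wmax + wmin))
        = ((m : ℝ) - 1) * wmax * wmin / (((m : ℝ) - 1) * wmax + wmin) ∧
    MGE 0 = ((m : ℝ) - 1) * wmax ∧
    MGE 0 = (1 + ((m : ℝ) - 1) * wmax / wmin)
        * (((m : ℝ) - 1) * wmax * wmin / (((m : ℝ) - 1) * wmax + wmin)) := by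
  have hm1 : (1 : ℝ) ≤ (m : ℝ) - 1 := by
    have : (2 : ℝ) ≤ (m : ℝ) := by exact_mod_cast hm
    linarith
  have hwmax : 0 < wmax := lt_of_lt_of_le hmin hle
  have ha : 0 < ((m : ℝ) - 1) * wmax := by positivity
  have hab : 0 < ((m : ℝ) - 1) * wmax + wmin := by linarith
  have hy : 0 ≤ ((m : ℝ) - 1) * wmax / (((m : ℝ) - 1) * wmax + wmin) :=
    le_of_lt (div_pos ha hab)
  have hy1 : ((m : ℝ) - 1) * wmax / (((m : ℝ) - 1) * wmax + wmin) ≤ 1 := by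
    rw [div_le_one hab]; linarith
  refine ⟨?_, ?_, ?_⟩
  · rw [hMGE]
    rw [sub_zero, abs_of_nonneg hy, abs_of_nonpos (by linarith)]
    have h1 : wmin * (((m : ℝ) - 1) * wmax / (((m : ℝ) - 1) * wmax + wmin))
        = ((m : ℝ) - 1) * wmax * wmin / (((m : ℝ) - 1) * wmax + wmin) := by
      ring
    have h2 : wmax * (((m : ℝ) - 1) * -(((m : ℝ) - 1) * wmax / (((m : ℝ) - 1) * wmax + wmin) - 1))
        = ((m : ℝ) - 1) * wmax * wmin / (((m : ℝ) - 1) * wmax + wmin) := by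
      field_simp
      ring
    rw [h1, h2, max_self]
  · rw [hMGE]
    simp [abs_of_nonpos (show (0:ℝ) - 1 ≤ 0 by norm_num)]
    rw [max_eq_right (by linarith)]
    ring
  · rw [hMGE]
    simp [abs_of_nonpos (show (0:ℝ) - 1 ≤ 0 by norm_num)]
    rw [max_eq_right (by linarith)]
    field_simp
    ring
end

section
/- Consider one agent at 0 in group G₁ of weight w_min > 0 and n − 1 agents at 1 in group G₂ of weight w_max ≥ w_min (n ≥ 2). Under the weighted total group cost objective for a single facility, the location y* = (n−1)·w_max/((n−1)·w_max + w_min) minimizes the maximum group effect, achieving value (n−1)·w_max·w_min/((n−1)·w_max + w_min), while the leftmost location 0 achieves (n−1)·w_max; hence the ratio is exactly 1 + (n−1)·w_max/w_min. -/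
def twoPointCost (p q y : ℝ) : ℝ :=
  max (p * |y|) (q * |y - 1|)

theorem twoPointCost_zero {q : ℝ} (p : ℝ) (hq : 0 ≤ q) : twoPointCost p q 0 = q := by
  simp [twoPointCost, hq]

/-- Weighting the two costs by `q` and `p` makes them sum to `q * p * (|y| + |y - 1|) ≥ q * p`. -/
theorem mul_div_add_le_twoPointCost {p q : ℝ} (hp : 0 ≤ p) (hq : 0 ≤ q) (hpq : 0 < q + p)
    (y : ℝ) : q * p / (q + p) ≤ twoPointCost p q y := by
  rw [div_le_iff₀ hpq]
  have hy : 1 ≤ |y| + |y - 1| := by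
    simpa using abs_sub_le 0 y 1
  calc q * p ≤ q * p * (|y| + |y - 1|) := le_mul_of_one_le_right (mul_nonneg hq hp) hy
    _ = q * (p * |y|) + p * (q * |y - 1|) := by ring
    _ ≤ q * twoPointCost p q y + p * twoPointCost p q y := by
      gcongr
      exacts [le_max_left _ _, le_max_right _ _]
    _ = twoPointCost p q y * (q + p) := by ring

theorem twoPointCost_div_add {p q : ℝ} (hp : 0 ≤ p) (hq : 0 ≤ q) (hpq : 0 < q + p) :
    twoPointCost p q (q / (q + p)) = q * p / (q + p) := by
  have h0 : |q / (q + p)| = q / (q + p) := abs_of_nonneg (by positivity)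
  have h1 : |q / (q + p) - 1| = p / (q + p) := by
    rw [abs_sub_comm, one_sub_div hpq.ne', add_sub_cancel_left, abs_of_nonneg (by positivity)]
  rw [twoPointCost, h0, h1, mul_div_assoc', mul_div_assoc', mul_comm p q, max_self]

theorem twoPointCost_div_add_le {p q : ℝ} (hp : 0 ≤ p) (hq : 0 ≤ q) (hpq : 0 < q + p) (y : ℝ) :
    twoPointCost p q (q / (q + p)) ≤ twoPointCost p q y :=
  twoPointCost_div_add hp hq hpq ▸ mul_div_add_le_twoPointCost hp hq hpq y

theorem stmt13 (n : ℕ) (hn : 2 ≤ n) (wmin wmax : ℝ)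
    (hmin : 0 < wmin) (hle : wmin ≤ wmax)
    (MGE : ℝ → ℝ)
    (hMGE : ∀ y : ℝ, MGE y =
      max (wmin * |y - 0|) (wmax * (((n : ℝ) - 1) * |y - 1|))) :
    (∀ y : ℝ, MGE (((n : ℝ) - 1) * wmax / (((n : ℝ) - 1) * wmax + wmin)) ≤ MGE y) ∧
    MGE (((n : ℝ) - 1) * wmax / (((n : ℝ) - 1) * wmax + wmin))
        = ((n : ℝ) - 1) * wmax * wmin / (((n : ℝ) - 1) * wmax + wmin) ∧
    MGE 0 = ((n : ℝ) - 1) * wmax ∧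
    MGE 0 = (1 + ((n : ℝ) - 1) * wmax / wmin)
        * (((n : ℝ) - 1) * wmax * wmin / (((n : ℝ) - 1) * wmax + wmin)) := by
  set q := ((n : ℝ) - 1) * wmax
  have hMGE' : MGE = twoPointCost wmin q := by
    ext y
    rw [hMGE, twoPointCost, sub_zero, ← mul_assoc, mul_comm wmax]
  have hq : 0 < q := by
    have : (2 : ℝ) ≤ n := by exact_mod_cast hn
    exact mul_pos (by linarith) (hmin.trans_le hle)
  have hqp : 0 < q + wmin := by linarith
  subst hMGE'
  refine ⟨twoPointCost_div_add_le hmin.le hq.le hqp, twoPointCost_div_add hmin.le hq.le hqp,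
    twoPointCost_zero wmin hq.le, ?_⟩
  rw [twoPointCost_zero wmin hq.le]
  field_simp
  ring
end

section
/- Let x₁, …, xₙ ∈ ℝ and v₁, …, v_{n−1} ∈ ℝ be fixed phantom points. The mechanism mapping (x₁, …, xₙ) to the median of the multiset {x₁, …, xₙ, v₁, …, v_{n−1}} (of size 2n − 1) is strategyproof: for every agent i, every misreport xᵢ', and every profile of the other agents' reports, |med(x₁,…,xᵢ,…,xₙ, v⃗) − xᵢ| ≤ |med(x₁,…,xᵢ',…,xₙ, v⃗) − xᵢ|. -/
/-!
Fix agent `i` and sort the other `2n - 2` numbers (the other reports and the phantoms) into a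
list `t`. Inserting a report `y` into `t`, the `n`-th smallest element is `y` clamped to the
interval between the two middle entries of `t`. So agent `i` can only move the median within an
interval that does not depend on its report, and truthful reporting selects the point of that
interval nearest to its location.
-/

open List

theorem List.Perm.insertionSort_eq {α : Type*} [LinearOrder α] {l₁ l₂ : List α} (h : l₁ ~ l₂) :
    l₁.insertionSort (· ≤ ·) = l₂.insertionSort (· ≤ ·) :=
  ((perm_insertionSort _ _).trans (h.trans (perm_insertionSort _ _).symm)).eq_of_pairwise'
    (pairwise_insertionSort _ _) (pairwise_insertionSort _ _)

theorem List.ofFn_update {α : Type*} {n : ℕ} (f : Fin n → α) (i : Fin n) (y : α) :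
    ofFn (Function.update f i y) = (ofFn f).set i y := by
  apply ext_getElem <;> simp [Function.update_apply, getElem_set, Fin.ext_iff, eq_comm]

section OrderedInsert

variable {α : Type*} [LinearOrder α]

theorem List.getD_orderedInsert_zero {t : List α} (ht : t ≠ []) (y d : α) :
    (t.orderedInsert (· ≤ ·) y).getD 0 d = min (t.getD 0 d) y := by
  obtain ⟨c, t, rfl⟩ := exists_cons_of_ne_nil ht
  by_cases hyc : y ≤ c
  · simp [orderedInsert, hyc]
  · simp [orderedInsert, hyc, (not_le.mp hyc).le]

theorem List.Pairwise.getD_orderedInsert_succ {t : List α} (ht : t.Pairwise (· ≤ ·))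
    (y d : α) {k : ℕ} (hk : k + 1 < t.length) :
    (t.orderedInsert (· ≤ ·) y).getD (k + 1) d = max (t.getD k d) (min (t.getD (k + 1) d) y) := by
  induction t generalizing k with
  | nil => simp at hk
  | cons c t ih =>
    have head_le : ∀ j < (c :: t).length, c ≤ (c :: t).getD j d := fun j hj => by
      rw [getD_eq_getElem _ _ hj]
      exact ht.sortedLE.getElem_le_getElem_of_le (hi := by simp) (Nat.zero_le j)
    by_cases hyc : y ≤ c
    · rw [List.orderedInsert, if_pos hyc, getD_cons_succ,
        min_eq_right (hyc.trans (head_le _ hk)), max_eq_left (hyc.trans (head_le _ (by omega)))]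
    · rw [List.orderedInsert, if_neg hyc, getD_cons_succ]
      rcases k with _ | j
      · have hne : t ≠ [] := ne_nil_of_length_pos (by simpa using hk)
        have hc : c ≤ t.getD 0 d := head_le 1 hk
        rw [getD_orderedInsert_zero hne, getD_cons_zero, getD_cons_succ,
          max_eq_right (le_min hc (not_le.mp hyc).le)]
      · rw [ih (pairwise_cons.mp ht).2 (by simpa using hk), getD_cons_succ, getD_cons_succ]

end OrderedInsert

theorem abs_projIcc_sub_le {α : Type*} [AddCommGroup α] [LinearOrder α] [IsOrderedAddMonoid α]
    {a b : α} (h : a ≤ b) (x : α) {z : α} (hz : z ∈ Set.Icc a b) :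
    |(Set.projIcc a b h x : α) - x| ≤ |z - x| := by
  rcases le_total x a with hxa | hax
  · rw [Set.projIcc_of_le_left h hxa, abs_of_nonneg (sub_nonneg.mpr hxa)]
    exact (sub_le_sub_right hz.1 x).trans (le_abs_self _)
  rcases le_total x b with hxb | hbx
  · simp [Set.projIcc_of_mem h ⟨hax, hxb⟩]
  · rw [Set.projIcc_of_right_le h hbx, abs_of_nonpos (sub_nonpos.mpr hbx), abs_sub_comm]
    simpa using (sub_le_sub_left hz.2 x).trans (le_abs_self _)

theorem List.exists_getD_insertionSort_set_eq_projIcc {α : Type*} [LinearOrder α] (l : List α)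
    {i k : ℕ} (hi : i < l.length) (hk : k + 2 < l.length) (d : α) :
    ∃ a b, ∃ h : a ≤ b, ∀ y,
      ((l.set i y).insertionSort (· ≤ ·)).getD (k + 1) d = Set.projIcc a b h y := by
  set t := (l.eraseIdx i).insertionSort (· ≤ ·)
  have ht : t.Pairwise (· ≤ ·) := pairwise_insertionSort _ _
  have hlen : k + 1 < t.length := by simp [t, length_eraseIdx_of_lt hi]; omega
  refine ⟨t.getD k d, t.getD (k + 1) d, ?_, fun y => ?_⟩
  · rw [getD_eq_getElem _ _ (by omega), getD_eq_getElem _ _ hlen]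
    exact ht.sortedLE.getElem_le_getElem_of_le (Nat.le_succ k)
  · rw [(set_perm_cons_eraseIdx hi y).insertionSort_eq, insertionSort_cons,
      ht.getD_orderedInsert_succ y d hlen, Set.coe_projIcc]

theorem stmt16_general (n : ℕ) (v : Fin (n - 1) → ℝ)
    (med : (Fin n → ℝ) → ℝ)
    (hmed : ∀ r : Fin n → ℝ,
      med r = ((List.ofFn r ++ List.ofFn v).insertionSort (· ≤ ·)).getD (n - 1) 0) :
    ∀ (r : Fin n → ℝ) (i : Fin n) (x' : ℝ),
      |med r - r i| ≤ |med (Function.update r i x') - r i| := by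
  intro r i x'
  rcases n with _ | _ | m
  · exact i.elim0
  · simp [hmed, Fin.fin_one_eq_zero i]
  · obtain ⟨a, b, hab, hclamp⟩ :=
      (List.ofFn r ++ List.ofFn v).exists_getD_insertionSort_set_eq_projIcc
        (i := i) (k := m) (by simp; omega) (by simp) 0
    have hmed_update : ∀ y, med (Function.update r i y) = Set.projIcc a b hab y := fun y => by
      rw [hmed, List.ofFn_update, ← List.set_append_left _ _ (by simpa using i.is_lt), ← hclamp y]
      rfl
    have hmed_self : med r = Set.projIcc a b hab (r i) := by
      rw [← hmed_update, Function.update_eq_self]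
    rw [hmed_self, hmed_update]
    exact abs_projIcc_sub_le hab (r i) (Set.projIcc a b hab x').2

theorem stmt16 (n : ℕ) (hn : 0 < n) (v : Fin (n - 1) → ℝ)
    (med : (Fin n → ℝ) → ℝ)
    (hmed : ∀ r : Fin n → ℝ,
      med r = ((List.ofFn r ++ List.ofFn v).insertionSort (· ≤ ·)).getD (n - 1) 0) :
    ∀ (r : Fin n → ℝ) (i : Fin n) (x' : ℝ),
      |med r - r i| ≤ |med (Function.update r i x') - r i| :=
  stmt16_general n v med hmed
end

section
/- Consider one agent at 0 with weight w_min > 0 and one agent at 1 with weight w_max ≥ w_min. For a single facility, the weighted maximum cost at location 0 is w_max, while the minimum over y ∈ ℝ of max(w_min·|y|, w_max·|y − 1|) equals w_max·w_min/(w_max + w_min); hence the ratio of the cost at 0 to the optimum is exactly 1 + w_max/w_min. -/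
/-!
Write `M(y) = max (a |y - p|) (b |y - q|)`. Since `M(y)` dominates the convex combination
`(b · a |y - p| + a · b |y - q|) / (a + b)`, the triangle inequality gives
`M(y) ≥ a b |p - q| / (a + b)`, with equality at the weighted mean `y = (a p + b q) / (a + b)`,
where both terms of the maximum agree. For `a = w_min`, `b = w_max`, `p = 0`, `q = 1` the optimum
is `w_max w_min / (w_max + w_min)`, and `w_max` exceeds it by the factor
`(w_max + w_min) / w_min = 1 + w_max / w_min`.
-/

open Set

section WeightedMaxDist

variable {a b : ℝ} (p q : ℝ)

theorem mul_abs_sub_le_add_mul_max (ha : 0 ≤ a) (hb : 0 ≤ b) (y : ℝ) :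
    a * b * |p - q| ≤ (a + b) * max (a * |y - p|) (b * |y - q|) := by
  have htri : |p - q| ≤ |y - p| + |y - q| := by
    simpa only [abs_sub_comm y p] using abs_sub_le p y q
  calc a * b * |p - q| ≤ b * (a * |y - p|) + a * (b * |y - q|) := by
        nlinarith [mul_nonneg ha hb]
    _ ≤ b * max (a * |y - p|) (b * |y - q|) + a * max (a * |y - p|) (b * |y - q|) := by
        gcongr
        exacts [le_max_left _ _, le_max_right _ _]
    _ = (a + b) * max (a * |y - p|) (b * |y - q|) := by ring

theorem max_mul_abs_sub_weighted_mean (ha : 0 ≤ a) (hb : 0 ≤ b) (hab : 0 < a + b) :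
    max (a * |(a * p + b * q) / (a + b) - p|) (b * |(a * p + b * q) / (a + b) - q|) =
      a * b * |p - q| / (a + b) := by
  have hp : (a * p + b * q) / (a + b) - p = b * (q - p) / (a + b) := by field_simp; ring
  have hq : (a * p + b * q) / (a + b) - q = a * (p - q) / (a + b) := by field_simp; ring
  rw [hp, hq, abs_div, abs_div, abs_mul, abs_mul, abs_of_nonneg ha, abs_of_nonneg hb,
    abs_of_pos hab, abs_sub_comm q p, ← mul_div_assoc, ← mul_div_assoc, ← mul_assoc,
    ← mul_assoc, mul_comm b a, max_self]

theorem isLeast_range_max_mul_abs_sub (ha : 0 ≤ a) (hb : 0 ≤ b) (hab : 0 < a + b) :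
    IsLeast (range fun y : ℝ => max (a * |y - p|) (b * |y - q|)) (a * b * |p - q| / (a + b)) := by
  refine ⟨⟨_, max_mul_abs_sub_weighted_mean p q ha hb hab⟩, ?_⟩
  rintro _ ⟨y, rfl⟩
  rw [div_le_iff₀' hab]
  exact mul_abs_sub_le_add_mul_max p q ha hb y

end WeightedMaxDist

theorem stmt19 (wmin wmax : ℝ) (hmin : 0 < wmin) (hle : wmin ≤ wmax) :
    max (wmin * |(0 : ℝ) - 0|) (wmax * |(0 : ℝ) - 1|) = wmax ∧
    IsLeast (Set.range fun y : ℝ => max (wmin * |y - 0|) (wmax * |y - 1|))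
      (wmax * wmin / (wmax + wmin)) ∧
    wmax = (1 + wmax / wmin) * (wmax * wmin / (wmax + wmin)) := by
  have hmax : 0 < wmax := hmin.trans_le hle
  have hsum : 0 < wmin + wmax := by positivity
  have hopt : wmin * wmax * |(0 : ℝ) - 1| / (wmin + wmax) = wmax * wmin / (wmax + wmin) := by
    norm_num [mul_comm, add_comm]
  refine ⟨by simp [hmax.le], ?_, ?_⟩
  · simpa only [hopt] using isLeast_range_max_mul_abs_sub 0 1 hmin.le hmax.le hsum
  · field_simp
    ring
end
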